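/- (Main theorem: compositionality.) Let x₊, y₊ ∈ evenOdd Q 0 and x₋, y₋ ∈ evenOdd Q 1, and set p₊ = x₊y₊ − (reverse y₋)x₋ and p₋ = y₋x₊ + x₋(reverse y₊), so that p₊ + p₋ = (x₊+x₋) • (y₊+y₋) with p₊ even and p₋ odd. Then N(x • y) = N(x)N(y); concretely, p₊ * reverse(p₊) + reverse(p₋) * p₋ = (x₊ * reverse(x₊) + reverse(x₋) * x₋) * (y₊ * reverse(y₊) + reverse(y₋) * y₋). -/

import Mathlib

/-!
In the Clifford algebra of a diagonal form on `ℝ³`, every even or odd element `x` has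
`x * reverse x = reverse x * x ∈ ℝ`; on the even part, spanned by `1, e₀e₁, e₀e₂, e₁e₂`, this is
the norm of a quaternion algebra. Expanding `N(x • y)` produces the four products of these scalar
norms, which add up to `N(x) N(y)`, and two cross terms. These cancel because `z ↦ z + reverse z`
is a trace on the even part, `tr (x₊ v) = tr (v x₊)` for `v = y₊ (reverse x₋) y₋`; that in turn
is the polarization of `Commute z (reverse z)` at `z = x₊ + reverse v`.
-/

open CliffordAlgebra

/-- The diagonal quadratic form on `ℝ³` with weights `l`. -/
noncomputable def Qf (l : Fin 3 → ℝ) : QuadraticForm ℝ (Fin 3 → ℝ) :=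
  QuadraticMap.weightedSumSquares ℝ l

/-- The octonionic product `x • y` of `x = x₊ + x₋` and `y = y₊ + y₋`, expressed in terms of
the even/odd parts: `x • y = x₊y₊ - (reverse y₋)x₋ + y₋x₊ + x₋(reverse y₊)`. -/
noncomputable def octMul {R M : Type*} [CommRing R] [AddCommGroup M] [Module R M]
    (Q : QuadraticForm R M) (xp xm yp ym : CliffordAlgebra Q) : CliffordAlgebra Q :=
  xp * yp - reverse ym * xm + ym * xp + xm * reverse yp

/-- The octonionic norm `N(x) = x • x*`, where `x* = reverse x₊ - x₋` is the full grade
inversion of `x = x₊ + x₋`. -/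
noncomputable def octNorm {R M : Type*} [CommRing R] [AddCommGroup M] [Module R M]
    (Q : QuadraticForm R M) (xp xm : CliffordAlgebra Q) : CliffordAlgebra Q :=
  octMul Q xp xm (reverse xp) (-xm)

def HasScalarNorm {R M : Type*} [CommRing R] [AddCommGroup M] [Module R M]
    {Q : QuadraticForm R M} (x : CliffordAlgebra Q) (s : R) : Prop :=
  x * reverse x = algebraMap R _ s ∧ reverse x * x = algebraMap R _ s

section

variable {R M : Type*} [CommRing R] [AddCommGroup M] [Module R M] {Q : QuadraticForm R M}

theorem octNorm_eq (a b : CliffordAlgebra Q) : octNorm Q a b = a * reverse a + reverse b * b := by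
  simp only [octNorm, octMul, map_neg, reverse_reverse, neg_mul, sub_neg_eq_add]
  abel

theorem HasScalarNorm.commute {x : CliffordAlgebra Q} {s : R} (h : HasScalarNorm x s) :
    Commute x (reverse x) :=
  h.1.trans h.2.symm

theorem mul_add_reverse_mul_comm {x y : CliffordAlgebra Q} (hx : Commute x (reverse x))
    (hy : Commute y (reverse y)) (hxy : Commute (x + reverse y) (reverse (x + reverse y))) :
    x * y + reverse (x * y) = y * x + reverse (y * x) := by
  have h := hxy.eq
  simp only [map_add, reverse_reverse, reverse.map_mul, add_mul, mul_add, hx.eq, hy.eq] at h ⊢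
  rw [← sub_eq_zero] at h ⊢
  rw [← h]
  abel

theorem octNorm_mul_of_hasScalarNorm {a b c d : CliffordAlgebra Q} {α β γ δ : R}
    (ha : HasScalarNorm a α) (hb : HasScalarNorm b β) (hc : HasScalarNorm c γ)
    (hd : HasScalarNorm d δ)
    (hcross : a * (c * reverse b * d) + reverse (a * (c * reverse b * d)) =
      c * reverse b * d * a + reverse (c * reverse b * d * a)) :
    octNorm Q (a * c - reverse d * b) (d * a + b * reverse c) = octNorm Q a b * octNorm Q c d := by
  simp only [octNorm_eq, map_sub, map_add, reverse.map_mul, reverse_reverse] at hcross ⊢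
  have expand : (a * c - reverse d * b) * (reverse c * reverse a - reverse b * d) +
      (reverse a * reverse d + c * reverse b) * (d * a + b * reverse c) =
      a * (c * reverse c) * reverse a + reverse d * (b * reverse b) * d +
        reverse a * (reverse d * d) * a + c * (reverse b * b) * reverse c +
        ((c * reverse b * d * a + reverse a * (reverse d * (b * reverse c))) -
          (a * (c * reverse b * d) + reverse d * (b * reverse c) * reverse a)) := by
    noncomm_ring
  rw [expand, hcross, sub_self, add_zero]
  simp only [hb.1, hb.2, hc.1, hd.2, Algebra.right_comm, ha.1, ha.2, ← map_mul, ← map_add]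
  congr 1
  ring

end

namespace Qf

variable (l : Fin 3 → ℝ)

noncomputable def e (i : Fin 3) : CliffordAlgebra (Qf l) :=
  ι (Qf l) (Pi.single i 1)

theorem e_mul_self (i : Fin 3) : e l i * e l i = l i • 1 := by
  rw [e, ι_sq_scalar, Algebra.algebraMap_eq_smul_one]
  simp [Qf, QuadraticMap.weightedSumSquares_apply, Pi.single_apply]

theorem e_mul_e_of_ne {i j : Fin 3} (h : i ≠ j) : e l i * e l j = -(e l j * e l i) := by
  refine ι_mul_ι_comm_of_isOrtho ?_
  rw [QuadraticMap.isOrtho_def]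
  simp [Qf, QuadraticMap.weightedSumSquares_apply, Pi.single_apply, mul_add,
    Finset.sum_add_distrib, h, h.symm]

theorem e_mul_e_mul_self (i : Fin 3) (x : CliffordAlgebra (Qf l)) :
    e l i * (e l i * x) = l i • x := by
  rw [← mul_assoc, e_mul_self, smul_one_mul]

-- Oriented so that `simp` sorts words in the generators by increasing index.
theorem e_mul_e_of_lt {i j : Fin 3} (h : i < j) : e l j * e l i = -(e l i * e l j) :=
  e_mul_e_of_ne l h.ne'

theorem e_mul_e_mul_of_lt {i j : Fin 3} (h : i < j) (x : CliffordAlgebra (Qf l)) :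
    e l j * (e l i * x) = -(e l i * (e l j * x)) := by
  rw [← mul_assoc, e_mul_e_of_lt l h, neg_mul, mul_assoc]

noncomputable def evenSpan : Submodule ℝ (CliffordAlgebra (Qf l)) :=
  Submodule.span ℝ (Set.range ![1, e l 0 * e l 1, e l 0 * e l 2, e l 1 * e l 2])

noncomputable def oddSpan : Submodule ℝ (CliffordAlgebra (Qf l)) :=
  Submodule.span ℝ (Set.range ![e l 0, e l 1, e l 2, e l 0 * (e l 1 * e l 2)])

theorem one_mem_evenSpan : 1 ∈ evenSpan l :=
  Submodule.subset_span ⟨0, rfl⟩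

theorem e_mul_e_mem_evenSpan {i j : Fin 3} (h : i < j) : e l i * e l j ∈ evenSpan l := by
  apply Submodule.subset_span
  fin_cases i <;> fin_cases j <;> simp at h ⊢

theorem e_mem_oddSpan (i : Fin 3) : e l i ∈ oddSpan l :=
  Submodule.subset_span ⟨i.castSucc, by fin_cases i <;> rfl⟩

theorem e_mul_e_mul_e_mem_oddSpan : e l 0 * (e l 1 * e l 2) ∈ oddSpan l :=
  Submodule.subset_span ⟨3, rfl⟩

theorem ι_mem_span_e (m : Fin 3 → ℝ) : ι (Qf l) m ∈ Submodule.span ℝ (Set.range (e l)) := by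
  rw [pi_eq_sum_univ' m, map_sum]
  exact Submodule.sum_mem _ fun i _ => by
    rw [map_smul]
    exact Submodule.smul_mem _ _ (Submodule.subset_span ⟨i, rfl⟩)

theorem span_e_mul_evenSpan_le : Submodule.span ℝ (Set.range (e l)) * evenSpan l ≤ oddSpan l := by
  rw [evenSpan, Submodule.span_mul_span, Submodule.span_le]
  rintro _ ⟨_, ⟨i, rfl⟩, _, ⟨k, rfl⟩, rfl⟩
  fin_cases i <;> fin_cases k <;>
    simp [e_mul_self, e_mul_e_mul_self, e_mul_e_of_lt, e_mul_e_mul_of_lt, Submodule.smul_mem,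
      e_mem_oddSpan, e_mul_e_mul_e_mem_oddSpan]

theorem span_e_mul_oddSpan_le : Submodule.span ℝ (Set.range (e l)) * oddSpan l ≤ evenSpan l := by
  rw [oddSpan, Submodule.span_mul_span, Submodule.span_le]
  rintro _ ⟨_, ⟨i, rfl⟩, _, ⟨k, rfl⟩, rfl⟩
  fin_cases i <;> fin_cases k <;>
    simp [e_mul_self, e_mul_e_mul_self, e_mul_e_of_lt, e_mul_e_mul_of_lt, Submodule.smul_mem,
      one_mem_evenSpan, e_mul_e_mem_evenSpan]

theorem evenOdd_zero_le_evenSpan : evenOdd (Qf l) 0 ≤ evenSpan l := by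
  intro x hx
  induction x, hx using even_induction with
  | algebraMap r =>
    rw [Algebra.algebraMap_eq_smul_one]
    exact Submodule.smul_mem _ _ (one_mem_evenSpan l)
  | add _ _ _ _ ihx ihy => exact add_mem ihx ihy
  | ι_mul_ι_mul m₁ m₂ x _ ih =>
    rw [mul_assoc]
    exact span_e_mul_oddSpan_le l <| Submodule.mul_mem_mul (ι_mem_span_e l m₁) <|
      span_e_mul_evenSpan_le l <| Submodule.mul_mem_mul (ι_mem_span_e l m₂) ih

theorem evenOdd_one_le_oddSpan : evenOdd (Qf l) 1 ≤ oddSpan l := by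
  intro x hx
  induction x, hx using odd_induction with
  | ι m => exact Submodule.span_le.2 (Set.range_subset_iff.2 (e_mem_oddSpan l)) (ι_mem_span_e l m)
  | add _ _ _ _ ihx ihy => exact add_mem ihx ihy
  | ι_mul_ι_mul m₁ m₂ x _ ih =>
    rw [mul_assoc]
    exact span_e_mul_evenSpan_le l <| Submodule.mul_mem_mul (ι_mem_span_e l m₁) <|
      span_e_mul_oddSpan_le l <| Submodule.mul_mem_mul (ι_mem_span_e l m₂) ih

@[simp]
theorem reverse_e (i : Fin 3) : reverse (e l i) = e l i :=
  reverse_ι _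

theorem exists_hasScalarNorm_of_mem_evenOdd_zero {x : CliffordAlgebra (Qf l)}
    (hx : x ∈ evenOdd (Qf l) 0) : ∃ s, HasScalarNorm x s := by
  obtain ⟨c, rfl⟩ := (Submodule.mem_span_range_iff_exists_fun ℝ).1 (evenOdd_zero_le_evenSpan l hx)
  refine ⟨c 0 ^ 2 + l 0 * l 1 * c 1 ^ 2 + l 0 * l 2 * c 2 ^ 2 + l 1 * l 2 * c 3 ^ 2, ?_, ?_⟩ <;>
  · simp only [Fin.sum_univ_four, Fin.isValue, Matrix.cons_val_zero, Matrix.cons_val_one,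
      Matrix.cons_val, map_add, map_smul, reverse.map_one, reverse.map_mul, reverse_e,
      Fin.reduceLT, zero_lt_one, e_mul_self, e_mul_e_mul_self, e_mul_e_of_lt, e_mul_e_mul_of_lt,
      mul_add, add_mul, mul_one, one_mul, mul_neg, neg_mul, mul_assoc, Algebra.mul_smul_comm,
      Algebra.smul_mul_assoc, smul_add, smul_neg, smul_smul, neg_neg, neg_add_rev,
      Algebra.algebraMap_eq_smul_one]
    module

theorem exists_hasScalarNorm_of_mem_evenOdd_one {x : CliffordAlgebra (Qf l)}
    (hx : x ∈ evenOdd (Qf l) 1) : ∃ s, HasScalarNorm x s := by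
  obtain ⟨c, rfl⟩ := (Submodule.mem_span_range_iff_exists_fun ℝ).1 (evenOdd_one_le_oddSpan l hx)
  refine ⟨l 0 * c 0 ^ 2 + l 1 * c 1 ^ 2 + l 2 * c 2 ^ 2 + l 0 * l 1 * l 2 * c 3 ^ 2, ?_, ?_⟩ <;>
  · simp only [Fin.sum_univ_four, Fin.isValue, Matrix.cons_val_zero, Matrix.cons_val_one,
      Matrix.cons_val, map_add, map_smul, reverse.map_mul, reverse_e,
      Fin.reduceLT, zero_lt_one, e_mul_self, e_mul_e_mul_self, e_mul_e_of_lt, e_mul_e_mul_of_lt,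
      mul_add, add_mul, mul_one, mul_neg, neg_mul, mul_assoc, Algebra.mul_smul_comm,
      Algebra.smul_mul_assoc, smul_add, smul_neg, smul_smul, neg_neg, neg_add_rev,
      Algebra.algebraMap_eq_smul_one]
    module

theorem mul_add_reverse_mul_comm_of_mem_evenOdd_zero {x y : CliffordAlgebra (Qf l)}
    (hx : x ∈ evenOdd (Qf l) 0) (hy : y ∈ evenOdd (Qf l) 0) :
    x * y + reverse (x * y) = y * x + reverse (y * x) :=
  have commute {z : CliffordAlgebra (Qf l)} (hz : z ∈ evenOdd (Qf l) 0) : Commute z (reverse z) :=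
    (exists_hasScalarNorm_of_mem_evenOdd_zero l hz).choose_spec.commute
  mul_add_reverse_mul_comm (commute hx) (commute hy)
    (commute (add_mem hx ((reverse_mem_evenOdd_iff _).2 hy)))

end Qf

theorem octNorm_mul_general (l : Fin 3 → ℝ)
    (xp xm yp ym : CliffordAlgebra (Qf l))
    (hxp : xp ∈ evenOdd (Qf l) 0) (hxm : xm ∈ evenOdd (Qf l) 1)
    (hyp : yp ∈ evenOdd (Qf l) 0) (hym : ym ∈ evenOdd (Qf l) 1) :
    octNorm (Qf l) (xp * yp - reverse ym * xm) (ym * xp + xm * reverse yp) =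
      octNorm (Qf l) xp xm * octNorm (Qf l) yp ym ∧
    (xp * yp - reverse ym * xm) * reverse (xp * yp - reverse ym * xm) +
        reverse (ym * xp + xm * reverse yp) * (ym * xp + xm * reverse yp) =
      (xp * reverse xp + reverse xm * xm) * (yp * reverse yp + reverse ym * ym) := by
  obtain ⟨_, ha⟩ := Qf.exists_hasScalarNorm_of_mem_evenOdd_zero l hxp
  obtain ⟨_, hb⟩ := Qf.exists_hasScalarNorm_of_mem_evenOdd_one l hxm
  obtain ⟨_, hc⟩ := Qf.exists_hasScalarNorm_of_mem_evenOdd_zero l hyp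
  obtain ⟨_, hd⟩ := Qf.exists_hasScalarNorm_of_mem_evenOdd_one l hym
  have hv : yp * reverse xm * ym ∈ evenOdd (Qf l) (0 + 1 + 1) :=
    SetLike.mul_mem_graded (SetLike.mul_mem_graded hyp ((reverse_mem_evenOdd_iff _).2 hxm)) hym
  have hmul := octNorm_mul_of_hasScalarNorm ha hb hc hd
    (Qf.mul_add_reverse_mul_comm_of_mem_evenOdd_zero l hxp hv)
  exact ⟨hmul, by simpa only [octNorm_eq] using hmul⟩

/-- (Main theorem: compositionality of the octonionic norm.) With
`p₊ = x₊y₊ - (reverse y₋)x₋` and `p₋ = y₋x₊ + x₋(reverse y₊)` the even and odd parts of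
`x • y`, one has `N(x • y) = N(x)N(y)`; concretely,
`p₊ * reverse p₊ + reverse p₋ * p₋ = (x₊ * reverse x₊ + reverse x₋ * x₋) * (y₊ * reverse y₊ + reverse y₋ * y₋)`. -/
theorem octNorm_mul (l : Fin 3 → ℝ) (hl : ∀ i, l i = 1 ∨ l i = -1)
    (xp xm yp ym : CliffordAlgebra (Qf l))
    (hxp : xp ∈ evenOdd (Qf l) 0) (hxm : xm ∈ evenOdd (Qf l) 1)
    (hyp : yp ∈ evenOdd (Qf l) 0) (hym : ym ∈ evenOdd (Qf l) 1) :
    octNorm (Qf l) (xp * yp - reverse ym * xm) (ym * xp + xm * reverse yp) =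
      octNorm (Qf l) xp xm * octNorm (Qf l) yp ym ∧
    (xp * yp - reverse ym * xm) * reverse (xp * yp - reverse ym * xm) +
        reverse (ym * xp + xm * reverse yp) * (ym * xp + xm * reverse yp) =
      (xp * reverse xp + reverse xm * xm) * (yp * reverse yp + reverse ym * ym) :=
  octNorm_mul_general l xp xm yp ym hxp hxm hyp hym
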